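/- arXiv:2306.08327 — 9 statements merged into one kernel-verified Lean document; each statement's English description precedes it below -/
import Mathlib

section
/- Let R be a ring with unity and suppose the set Id(R) of idempotent elements of R is finite. If x ∈ R satisfies 2x ∈ Id(R), then in the idempotent graph G_Id(R) the degree of the vertex x equals |Id(R)| − 1. -/
/-- The idempotent graph of a ring: vertices are ring elements, distinct `x, y`
adjacent iff `x + y` is idempotent. -/
def idemGraph (R : Type*) [Ring R] : SimpleGraph R where
  Adj x y := x ≠ y ∧ IsIdempotentElem (x + y)
  symm := ⟨fun x y ⟨h, hi⟩ => ⟨h.symm, by rwa [add_comm]⟩⟩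
  loopless := ⟨fun x ⟨h, _⟩ => h rfl⟩

/-- The set of idempotent elements of a ring. -/
def idemSet (R : Type*) [Ring R] : Set R := {e : R | IsIdempotentElem e}

theorem idemGraph_neighborSet_eq_image {R : Type*} [Ring R] (x : R) :
    (idemGraph R).neighborSet x = (fun e => e - x) '' (idemSet R \ {x + x}) := by
  ext y
  simp only [SimpleGraph.mem_neighborSet, idemGraph, idemSet, Set.mem_image, Set.mem_sdiff,
    Set.mem_singleton_iff, Set.mem_ofPred_eq]
  constructor
  · rintro ⟨hne, hidem⟩
    exact ⟨x + y, ⟨hidem, fun h => hne (add_left_cancel h).symm⟩, add_sub_cancel_left x y⟩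
  · rintro ⟨e, ⟨hidem, hne⟩, rfl⟩
    refine ⟨fun h => hne (sub_eq_iff_eq_add.mp h.symm), ?_⟩
    rwa [add_sub_cancel]

theorem stmt0_general {R : Type*} [Ring R] (x : R)
    (hx : x + x ∈ idemSet R) :
    ((idemGraph R).neighborSet x).ncard = (idemSet R).ncard - 1 := by
  rw [idemGraph_neighborSet_eq_image, Set.ncard_image_of_injective _ sub_left_injective,
    Set.ncard_sdiff_singleton_of_mem hx]

theorem stmt0 {R : Type*} [Ring R] (hfin : (idemSet R).Finite) (x : R)
    (hx : x + x ∈ idemSet R) :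
    ((idemGraph R).neighborSet x).ncard = (idemSet R).ncard - 1 :=
  stmt0_general x hx
end

section
/- For a ring R with unity, the idempotent graph G_Id(R) is connected if and only if the additive group (R, +) is generated by the set Id(R) of idempotents of R. -/
/-!
Every edge has the form `{x, e - x}` with `e` idempotent, so reachability from `0` is generated
by the moves `x ↦ e - x`. With `e = 0` these give `x ↦ -x`, and composing, `x ↦ x ± e`; hence the
component of `0` is exactly the additive subgroup generated by the idempotents.
-/

namespace idemGraph

variable {R : Type*} [Ring R]

lemma reachable_idem_sub {e : R} (he : IsIdempotentElem e) (x : R) :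
    (idemGraph R).Reachable x (e - x) := by
  by_cases h : x = e - x
  · rw [← h]
  · exact SimpleGraph.Adj.reachable ⟨h, by rwa [add_sub_cancel]⟩

lemma reachable_neg (x : R) : (idemGraph R).Reachable x (-x) := by
  simpa using reachable_idem_sub IsIdempotentElem.zero x

lemma reachable_zero_of_mem_closure {x : R} (hx : x ∈ AddSubgroup.closure (idemSet R)) :
    (idemGraph R).Reachable 0 x := by
  induction hx using AddSubgroup.closure_induction_left with
  | zero => rfl
  | add_left e he y _ hy =>
    have hmove := (reachable_neg y).trans (reachable_idem_sub he (-y))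
    rw [sub_neg_eq_add] at hmove
    exact hy.trans hmove
  | neg_add_cancel e he y _ hy =>
    have hmove := (reachable_idem_sub he y).trans (reachable_neg (e - y))
    rw [neg_sub, sub_eq_neg_add] at hmove
    exact hy.trans hmove

lemma mem_closure_of_reachable_zero {x : R} (hx : (idemGraph R).Reachable 0 x) :
    x ∈ AddSubgroup.closure (idemSet R) := by
  rw [SimpleGraph.reachable_iff_reflTransGen] at hx
  induction hx with
  | refl => exact zero_mem _
  | @tail y z _ hadj hy =>
    rw [← add_sub_cancel_left y z]
    exact sub_mem (AddSubgroup.subset_closure hadj.2) hy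

lemma reachable_zero_iff_mem_closure {x : R} :
    (idemGraph R).Reachable 0 x ↔ x ∈ AddSubgroup.closure (idemSet R) :=
  ⟨mem_closure_of_reachable_zero, reachable_zero_of_mem_closure⟩

end idemGraph

theorem stmt2 {R : Type*} [Ring R] :
    (idemGraph R).Connected ↔ AddSubgroup.closure (idemSet R) = ⊤ := by
  rw [SimpleGraph.connected_iff_exists_forall_reachable, AddSubgroup.eq_top_iff']
  simp_rw [← idemGraph.reachable_zero_iff_mem_closure]
  exact ⟨fun ⟨v, hv⟩ x => (hv 0).symm.trans (hv x), fun h => ⟨0, h⟩⟩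
end

section
/- Let R be a finite commutative ring with unity that is isomorphic to a direct product R_1 × R_2 × ⋯ × R_n of n ≥ 4 local rings. Then the idempotent graph G_Id(R) contains K_5 as a subgraph; in particular G_Id(R) is not planar. -/
namespace OrthogonalIdempotents

variable {R I : Type*} [Ring R] {e : I → R}

lemma ne_of_ne_zero (he : OrthogonalIdempotents e) (hne : ∀ i, e i ≠ 0) {i j : I} (hij : i ≠ j) :
    e i ≠ e j := by
  intro h
  apply hne i
  rw [← (he.idem i).eq]
  nth_rewrite 2 [h]
  exact he.ortho hij

lemma idemGraph_adj (he : OrthogonalIdempotents e) (hne : ∀ i, e i ≠ 0) {i j : I} (hij : i ≠ j) :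
    (idemGraph R).Adj (e i) (e j) :=
  ⟨he.ne_of_ne_zero hne hij, (he.idem i).add (he.idem j) <| by
    rw [he.ortho hij, he.ortho hij.symm, add_zero]⟩

lemma idemGraph_adj_zero (he : OrthogonalIdempotents e) (hne : ∀ i, e i ≠ 0) (i : I) :
    (idemGraph R).Adj 0 (e i) :=
  ⟨(hne i).symm, by rw [zero_add]; exact he.idem i⟩

def idemGraphHom (he : OrthogonalIdempotents e) (hne : ∀ i, e i ≠ 0) :
    (⊤ : SimpleGraph (Option I)) →g idemGraph R where
  toFun o := o.elim 0 e
  map_rel' {a b} hab := by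
    rcases a with _ | i <;> rcases b with _ | j
    · exact absurd rfl hab
    · exact he.idemGraph_adj_zero hne j
    · exact (he.idemGraph_adj_zero hne i).symm
    · exact he.idemGraph_adj hne fun h => hab (congrArg some h)

end OrthogonalIdempotents

theorem stmt3_general {n : ℕ} (hn : 4 ≤ n) (R : Fin n → Type*) [∀ i, CommRing (R i)]
    [∀ i, IsLocalRing (R i)] :
    ∃ f : Fin 5 → (∀ i, R i), Function.Injective f ∧
      ∀ i j, i ≠ j → (idemGraph (∀ i, R i)).Adj (f i) (f j) := by
  let clique := (CompleteOrthogonalIdempotents.single R).toOrthogonalIdempotents.idemGraphHom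
    fun i => by simp
  let index : Fin 5 ↪ Option (Fin n) :=
    (finSuccEquiv 4).toEmbedding.trans (Fin.castLEEmb hn).optionMap
  let f := clique.comp (SimpleGraph.Embedding.completeGraph index).toHom
  exact ⟨f, f.injective_of_top_hom, fun i j hij => f.map_adj hij⟩

theorem stmt3 {n : ℕ} (hn : 4 ≤ n) (R : Fin n → Type*) [∀ i, CommRing (R i)]
    [∀ i, IsLocalRing (R i)] [∀ i, Fintype (R i)] :
    ∃ f : Fin 5 → (∀ i, R i), Function.Injective f ∧
      ∀ i j, i ≠ j → (idemGraph (∀ i, R i)).Adj (f i) (f j) :=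
  stmt3_general hn R
end

section
/- Let R be a finite non-local commutative ring with unity. Then G_Id(R) is a split graph if and only if R is isomorphic to a finite direct product Z_2 × Z_2 × ⋯ × Z_2. -/
/-- A split graph: vertices partition into a clique and an independent set. -/
def IsSplitGraph {V : Type*} (G : SimpleGraph V) : Prop :=
  ∃ C I : Set V, Disjoint C I ∧ C ∪ I = Set.univ ∧ G.IsClique C ∧
    I.Pairwise (fun a b => ¬ G.Adj a b)

/-- A cograph: no induced path on four vertices. -/
def IsCograph {V : Type*} (G : SimpleGraph V) : Prop :=
  ¬ ∃ a b c d : V, a ≠ c ∧ a ≠ d ∧ b ≠ d ∧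
    G.Adj a b ∧ G.Adj b c ∧ G.Adj c d ∧ ¬ G.Adj a c ∧ ¬ G.Adj a d ∧ ¬ G.Adj b d

/-! A nonlocal finite ring has an idempotent `e ≠ 0, 1`. If `e * t = 0` and `t` is not
idempotent, the edges `0 — e` and `t — (1 - t)` of the idempotent graph span an induced `2K₂`,
which no split graph contains. Since `a = e * a + (1 - e) * a` is an orthogonal sum, a split
idempotent graph thus forces every element to be idempotent, and a finite Boolean ring is a
product of copies of `ZMod 2` (it is reduced Artinian, and each residue field is Boolean).
Conversely, in such a product every element is idempotent and the graph is complete. -/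

theorem isSplitGraph_top {V : Type*} : IsSplitGraph (⊤ : SimpleGraph V) :=
  ⟨Set.univ, ∅, Set.disjoint_empty _, Set.union_empty _, SimpleGraph.isClique_univ.mpr rfl,
    Set.pairwise_empty _⟩

/-- Split graphs have no induced `2K₂`. -/
theorem IsSplitGraph.adj_or_adj_or_adj_or_adj {V : Type*} {G : SimpleGraph V}
    (hG : IsSplitGraph G) {a b c d : V} (hab : G.Adj a b) (hcd : G.Adj c d) :
    G.Adj a c ∨ G.Adj a d ∨ G.Adj b c ∨ G.Adj b d := by
  obtain ⟨C, I, -, hCI, hC, hI⟩ := hG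
  have mem_clique : ∀ {x y}, G.Adj x y → x ∈ C ∨ y ∈ C := by
    intro x y hxy
    by_contra! h
    have mem_I : ∀ {z}, z ∉ C → z ∈ I := fun hz =>
      (Set.eq_univ_iff_forall.mp hCI _).resolve_left hz
    exact hI (mem_I h.1) (mem_I h.2) hxy.ne hxy
  by_contra! h
  obtain ⟨hac, had, hbc, hbd⟩ := h
  rcases mem_clique hab with ha | hb <;> rcases mem_clique hcd with hc | hd
  · exact hac (hC ha hc (by rintro rfl; exact had hcd))
  · exact had (hC ha hd (by rintro rfl; exact hac hcd.symm))
  · exact hbc (hC hb hc (by rintro rfl; exact hbd hcd))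
  · exact hbd (hC hb hd (by rintro rfl; exact hbc hcd.symm))

section idemGraph

variable {R : Type*} [CommRing R]

theorem idemGraph_eq_top (h : ∀ x : R, IsIdempotentElem x) : idemGraph R = ⊤ := by
  ext x y
  exact ⟨SimpleGraph.Adj.ne, fun hxy => ⟨hxy, h _⟩⟩

theorem not_isSplitGraph_idemGraph {e t : R} (he : IsIdempotentElem e) (he0 : e ≠ 0)
    (het : e * t = 0) (ht : ¬IsIdempotentElem t) : ¬IsSplitGraph (idemGraph R) := by
  intro hsplit
  have adj_zero_e : (idemGraph R).Adj 0 e := ⟨he0.symm, by simpa using he⟩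
  have adj_t : (idemGraph R).Adj t (1 - t) :=
    ⟨fun h => he0 (by linear_combination 2 * het - e * h), by simpa using IsIdempotentElem.one⟩
  rcases hsplit.adj_or_adj_or_adj_or_adj adj_zero_e adj_t with h | h | h | h
  · exact ht (by simpa using h.2)
  · exact ht (IsIdempotentElem.one_sub_iff.mp (by simpa using h.2))
  · exact ht (isIdempotentElem_iff.mpr (by linear_combination h.2.eq - he.eq - 2 * het))
  · have h2 : t * t = t - 2 * e := by linear_combination h.2.eq - he.eq + 2 * het
    exact ht (isIdempotentElem_iff.mpr
      (by linear_combination (1 - e) * h2 + (t - 1) * het + 2 * he.eq))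

theorem forall_isIdempotentElem_of_isSplitGraph_idemGraph (hsplit : IsSplitGraph (idemGraph R))
    {e : R} (he : IsIdempotentElem e) (he0 : e ≠ 0) (he1 : e ≠ 1) (a : R) :
    IsIdempotentElem a := by
  rw [show a = e * a + (1 - e) * a by ring]
  refine IsIdempotentElem.add ?_ ?_ (by linear_combination -2 * a * a * he.eq)
  · by_contra h
    exact not_isSplitGraph_idemGraph he.one_sub (sub_ne_zero.mpr he1.symm)
      (by linear_combination -a * he.eq) h hsplit
  · by_contra h
    exact not_isSplitGraph_idemGraph he he0 (by linear_combination -a * he.eq) h hsplit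

end idemGraph

theorem IsArtinianRing.exists_isIdempotentElem_ne_zero_ne_one {R : Type*} [CommRing R]
    [IsArtinianRing R] {p q : Ideal R} [p.IsPrime] [hq : q.IsPrime] (hpq : q ≠ p) :
    ∃ e : R, IsIdempotentElem e ∧ e ≠ 0 ∧ e ≠ 1 := by
  obtain ⟨e, hep, he, heq⟩ := IsArtinianRing.exists_not_mem_forall_mem_of_ne p
  refine ⟨e, he, fun h => hep (h ▸ p.zero_mem), fun h => hq.ne_top ?_⟩
  exact (Ideal.eq_top_iff_one q).mpr (h ▸ heq q hq hpq)

theorem nonempty_ringEquiv_zmod_two_of_forall_isIdempotentElem {K : Type*} [Field K]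
    (h : ∀ x : K, IsIdempotentElem x) : Nonempty (K ≃+* ZMod 2) := by
  have : CharP K 2 := CharTwo.of_one_ne_zero_of_two_eq_zero one_ne_zero
    (by linear_combination (h 2).eq - 2 * (h 1).eq)
  refine ⟨(RingEquiv.ofBijective (ZMod.castHom dvd_rfl K) ⟨(ZMod.castHom _ K).injective,
    fun x => ?_⟩).symm⟩
  rcases IsIdempotentElem.iff_eq_zero_or_one.mp (h x) with rfl | rfl
  exacts [⟨0, map_zero _⟩, ⟨1, map_one _⟩]

theorem exists_ringEquiv_pi_zmod_two_of_forall_isIdempotentElem {R : Type*} [CommRing R]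
    [Finite R] (h : ∀ x : R, IsIdempotentElem x) :
    ∃ n : ℕ, Nonempty (R ≃+* (Fin n → ZMod 2)) := by
  have : IsArtinianRing R := isArtinian_of_finite
  have : IsReduced R := ⟨fun x hx => (h x).eq_zero_of_isNilpotent hx⟩
  have quotient_equiv (m : MaximalSpectrum R) : Nonempty ((R ⧸ m.asIdeal) ≃+* ZMod 2) := by
    have := m.isMaximal
    let := Ideal.Quotient.field m.asIdeal
    refine nonempty_ringEquiv_zmod_two_of_forall_isIdempotentElem fun x => ?_
    obtain ⟨x, rfl⟩ := Ideal.Quotient.mk_surjective x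
    exact (h x).map _
  obtain ⟨n, ⟨σ⟩⟩ := Finite.exists_equiv_fin (MaximalSpectrum R)
  exact ⟨n, ⟨(IsArtinianRing.equivPi R).toRingEquiv.trans <|
    (RingEquiv.piCongrRight fun m => (quotient_equiv m).some).trans <|
      RingEquiv.piCongrLeft' _ σ⟩⟩

theorem forall_isIdempotentElem_of_ringEquiv_pi_zmod_two {R : Type*} [CommRing R] {n : ℕ}
    (φ : R ≃+* (Fin n → ZMod 2)) (x : R) : IsIdempotentElem x := by
  have hzmod : ∀ z : ZMod 2, z * z = z := by decide
  have hpi : IsIdempotentElem (φ x) := funext fun i => hzmod (φ x i)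
  simpa using hpi.map φ.symm

theorem stmt6 {R : Type*} [CommRing R] [Fintype R]
    (hnonlocal : ∃ m₁ m₂ : Ideal R, m₁.IsMaximal ∧ m₂.IsMaximal ∧ m₁ ≠ m₂) :
    IsSplitGraph (idemGraph R) ↔
      ∃ n : ℕ, Nonempty (R ≃+* (Fin n → ZMod 2)) := by
  obtain ⟨m₁, m₂, h₁, h₂, hne⟩ := hnonlocal
  have : IsArtinianRing R := isArtinian_of_finite
  have := h₁.isPrime
  have := h₂.isPrime
  obtain ⟨e, he, he0, he1⟩ := IsArtinianRing.exists_isIdempotentElem_ne_zero_ne_one hne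
  constructor
  · intro hsplit
    exact exists_ringEquiv_pi_zmod_two_of_forall_isIdempotentElem
      (forall_isIdempotentElem_of_isSplitGraph_idemGraph hsplit he he0 he1)
  · rintro ⟨n, ⟨φ⟩⟩
    rw [idemGraph_eq_top (forall_isIdempotentElem_of_ringEquiv_pi_zmod_two φ)]
    exact isSplitGraph_top
end

section
/- Let R ≅ R_1 × R_2 × ⋯ × R_n (n ≥ 2) be a finite commutative ring with unity where each R_i is a local ring of characteristic 2. Then the idempotent graph G_Id(R) contains no induced path on 4 vertices, i.e., G_Id(R) is a cograph. -/
theorem IsIdempotentElem.add_of_one_add_one_eq_zero {R : Type*} [CommSemiring R]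
    (h2 : (1 : R) + 1 = 0) {e f : R} (he : IsIdempotentElem e) (hf : IsIdempotentElem f) :
    IsIdempotentElem (e + f) :=
  he.add hf <| by rw [mul_comm f e, ← one_mul (e * f), ← add_mul, h2, zero_mul]

section CharTwo

variable {R : Type*} [CommRing R]

theorem add_eq_add_add_add_of_one_add_one_eq_zero (h2 : (1 : R) + 1 = 0) (x y z : R) :
    x + y = (x + z) + (z + y) := by
  linear_combination (-z) * h2

theorem idemGraph_adj_trans (h2 : (1 : R) + 1 = 0) {a b c : R}
    (hab : (idemGraph R).Adj a b) (hbc : (idemGraph R).Adj b c) (hac : a ≠ c) :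
    (idemGraph R).Adj a c :=
  ⟨hac, add_eq_add_add_add_of_one_add_one_eq_zero h2 a c b ▸
    hab.2.add_of_one_add_one_eq_zero h2 hbc.2⟩

theorem isCograph_idemGraph (h2 : (1 : R) + 1 = 0) : IsCograph (idemGraph R) :=
  fun ⟨_, _, _, _, hac, _, _, hab, hbc, _, nac, _, _⟩ => nac (idemGraph_adj_trans h2 hab hbc hac)

end CharTwo

theorem stmt7_general {n : ℕ} (R : Fin n → Type*) [∀ i, CommRing (R i)]
    (hchar : ∀ i, (1 : R i) + 1 = 0) :
    IsCograph (idemGraph (∀ i, R i)) :=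
  isCograph_idemGraph (R := ∀ i, R i) (funext hchar)

theorem stmt7 {n : ℕ} (hn : 2 ≤ n) (R : Fin n → Type*) [∀ i, CommRing (R i)]
    [∀ i, IsLocalRing (R i)] [∀ i, Fintype (R i)]
    (hchar : ∀ i, (1 : R i) + 1 = 0) :
    IsCograph (idemGraph (∀ i, R i)) :=
  stmt7_general R hchar
end

section
/- Let R be a finite commutative ring with unity such that R ≅ R_1 × R_2 × R_3 with each R_i local and char(R_1) = char(R_2) = 2. Then G_Id(R) contains K_5 as a subgraph (on the five vertices (a_1,b_1,0), (a_1,b_2,0), (a_2,b_1,0), (a_2,b_2,0), (a_1,b_1,1) where a_1,a_2 ∈ R_1 and b_1,b_2 ∈ R_2 are distinct elements with a_i + a_j ∈ Id(R_1) and b_i + b_j ∈ Id(R_2) for all i, j); in particular G_Id(R) is not planar. -/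
/-
Put the sum-closed pairs `{a₁, a₂}` and `{b₁, b₂}` in the first two coordinates and `0` in the
third: any two of these four points add to a triple of idempotents. A fifth point `(a₁, b₁, 1)`
still adds to an idempotent with each of them, because `1 + 0 = 1`; only `1 + 1` would fail, and
no two points have third coordinate `1`.
-/

theorem Prod.isIdempotentElem_iff {M N : Type*} [Mul M] [Mul N] {p : M × N} :
    IsIdempotentElem p ↔ IsIdempotentElem p.1 ∧ IsIdempotentElem p.2 :=
  Prod.ext_iff

theorem isClique_idemGraph_prod_insert {R₁ R₂ R₃ : Type*} [Ring R₁] [Ring R₂] [Ring R₃]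
    {s : Set R₁} {t : Set R₂}
    (hs : ∀ x ∈ s, ∀ y ∈ s, IsIdempotentElem (x + y))
    (ht : ∀ x ∈ t, ∀ y ∈ t, IsIdempotentElem (x + y))
    {x₀ : R₁} {y₀ : R₂} (hx₀ : x₀ ∈ s) (hy₀ : y₀ ∈ t) :
    (idemGraph (R₁ × R₂ × R₃)).IsClique (insert (x₀, y₀, 1) (s ×ˢ t ×ˢ {0})) := by
  have hsum : ∀ p ∈ s ×ˢ t ×ˢ ({0} : Set R₃), ∀ x ∈ s, ∀ y ∈ t, ∀ z : R₃,
      IsIdempotentElem z → IsIdempotentElem (p + (x, y, z)) := by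
    rintro ⟨x', y', _⟩ ⟨hx', hy', rfl⟩ x hx y hy z hz
    simp only [Prod.mk_add_mk, zero_add, Prod.isIdempotentElem_iff]
    exact ⟨hs x' hx' x hx, ht y' hy' y hy, hz⟩
  refine SimpleGraph.isClique_insert.2 ⟨?_, fun p hp hne => ?_⟩
  · rintro p hp ⟨x, y, _⟩ ⟨hx, hy, rfl⟩ hne
    exact ⟨hne, hsum p hp x hx y hy 0 .zero⟩
  · exact ⟨hne, add_comm p _ ▸ hsum p hp x₀ hx₀ y₀ hy₀ 1 .one⟩

theorem stmt11_general {R₁ R₂ R₃ : Type*} [CommRing R₁] [CommRing R₂] [CommRing R₃]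
    [IsLocalRing R₃]
    (a1 a2 : R₁) (b1 b2 : R₂) (ha : a1 ≠ a2) (hb : b1 ≠ b2)
    (haI : ∀ x ∈ ({a1, a2} : Set R₁), ∀ y ∈ ({a1, a2} : Set R₁),
      IsIdempotentElem (x + y))
    (hbI : ∀ x ∈ ({b1, b2} : Set R₂), ∀ y ∈ ({b1, b2} : Set R₂),
      IsIdempotentElem (x + y)) :
    ∃ f : Fin 5 → R₁ × R₂ × R₃,
      f 0 = (a1, b1, 0) ∧ f 1 = (a1, b2, 0) ∧ f 2 = (a2, b1, 0) ∧
      f 3 = (a2, b2, 0) ∧ f 4 = (a1, b1, 1) ∧ Function.Injective f ∧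
      ∀ i j, i ≠ j → (idemGraph (R₁ × R₂ × R₃)).Adj (f i) (f j) := by
  set f : Fin 5 → R₁ × R₂ × R₃ :=
    ![(a1, b1, 0), (a1, b2, 0), (a2, b1, 0), (a2, b2, 0), (a1, b1, 1)]
  have hclique := isClique_idemGraph_prod_insert (R₃ := R₃) haI hbI
    (Set.mem_insert a1 {a2}) (Set.mem_insert b1 {b2})
  have hmem : ∀ i, f i ∈ insert (a1, b1, 1) ({a1, a2} ×ˢ {b1, b2} ×ˢ {0}) := by
    intro i
    fin_cases i <;> simp [f]
  have hinj : Function.Injective f := by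
    intro i j
    fin_cases i <;> fin_cases j <;> simp [f, ha, hb, ha.symm, hb.symm]
  exact ⟨f, rfl, rfl, rfl, rfl, rfl, hinj,
    fun i j hij => hclique (hmem i) (hmem j) (hinj.ne hij)⟩

theorem stmt11 {R₁ R₂ R₃ : Type*} [CommRing R₁] [CommRing R₂] [CommRing R₃]
    [IsLocalRing R₁] [IsLocalRing R₂] [IsLocalRing R₃]
    [Fintype R₁] [Fintype R₂] [Fintype R₃]
    (hc1 : (1 : R₁) + 1 = 0) (hc2 : (1 : R₂) + 1 = 0)
    (a1 a2 : R₁) (b1 b2 : R₂) (ha : a1 ≠ a2) (hb : b1 ≠ b2)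
    (haI : ∀ x ∈ ({a1, a2} : Set R₁), ∀ y ∈ ({a1, a2} : Set R₁),
      IsIdempotentElem (x + y))
    (hbI : ∀ x ∈ ({b1, b2} : Set R₂), ∀ y ∈ ({b1, b2} : Set R₂),
      IsIdempotentElem (x + y)) :
    ∃ f : Fin 5 → R₁ × R₂ × R₃,
      f 0 = (a1, b1, 0) ∧ f 1 = (a1, b2, 0) ∧ f 2 = (a2, b1, 0) ∧
      f 3 = (a2, b2, 0) ∧ f 4 = (a1, b1, 1) ∧ Function.Injective f ∧
      ∀ i j, i ≠ j → (idemGraph (R₁ × R₂ × R₃)).Adj (f i) (f j) :=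
  stmt11_general a1 a2 b1 b2 ha hb haI hbI
end

section
/- Let R = Z_2 × Z_4. Then the idempotent graph G_Id(R) is planar. -/
/-- `G` contains a subdivision of `H`: branch vertices joined by internally
disjoint paths. -/
def ContainsSubdivision {V W : Type*} (G : SimpleGraph V) (H : SimpleGraph W) : Prop :=
  ∃ (b : W → V) (P : ∀ u v : W, H.Adj u v → G.Walk (b u) (b v)),
    Function.Injective b ∧
    (∀ u v (h : H.Adj u v), (P u v h).IsPath) ∧
    (∀ u v (h : H.Adj u v) (w : W), b w ∈ (P u v h).support → w = u ∨ w = v) ∧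
    (∀ u v u' v' (h : H.Adj u v) (h' : H.Adj u' v'), s(u, v) ≠ s(u', v') →
      ∀ x, x ∈ (P u v h).support → x ∈ (P u' v' h').support →
        x ∈ ({b u, b v} : Set V) ∩ {b u', b v'})

/-- Planarity via the Kuratowski criterion: no subdivision of `K₅` or `K₃,₃`. -/
def IsPlanar {V : Type*} (G : SimpleGraph V) : Prop :=
  ¬ ContainsSubdivision G (SimpleGraph.completeGraph (Fin 5)) ∧
  ¬ ContainsSubdivision G (completeBipartiteGraph (Fin 3) (Fin 3))

/-- Outerplanarity via the forbidden-subdivision criterion: no subdivision of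
`K₄` or `K₂,₃`. -/
def IsOuterplanar {V : Type*} (G : SimpleGraph V) : Prop :=
  ¬ ContainsSubdivision G (SimpleGraph.completeGraph (Fin 4)) ∧
  ¬ ContainsSubdivision G (completeBipartiteGraph (Fin 2) (Fin 3))

/-!
The idempotent graph of `ℤ₂ × ℤ₄` joins distinct `(a, b)` and `(c, d)` iff `b + d ∈ {0, 1}`.
Only the four vertices `(a, 1)`, `(a, 3)` have degree `4`, too few for the branch vertices of
a subdivided `K₅`. The other four have degree `3` and form adjacent twin pairs: `(0, 0)` and
`(1, 0)` are both joined exactly to `(0, 1)` and `(1, 1)`, and `(0, 2)`, `(1, 2)` to `(0, 3)`,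
`(1, 3)`. At a branch vertex of degree `3` of a subdivided `K₃,₃` the paths leave along every
edge. Hence either both twins of a pair are branch vertices or neither is (a path entering the
other twin could only continue to a vertex where another path starts), and if both are, their
common neighbours are not (`K₃,₃` has no triangle). So each twin pair together with its two
common neighbours contains two non-branch vertices, but there are only `8 - 6 = 2` of them.
-/

open SimpleGraph Finset

structure Subdivision {V W : Type*} (G : SimpleGraph V) (H : SimpleGraph W) where
  branch : W → V
  path : ∀ u v : W, H.Adj u v → G.Walk (branch u) (branch v)
  branch_injective : Function.Injective branch
  isPath_path : ∀ u v (h : H.Adj u v), (path u v h).IsPath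
  eq_or_eq_of_branch_mem_support :
    ∀ u v (h : H.Adj u v) (w : W), branch w ∈ (path u v h).support → w = u ∨ w = v
  mem_inter_of_mem_support_of_mem_support :
    ∀ u v u' v' (h : H.Adj u v) (h' : H.Adj u' v'), s(u, v) ≠ s(u', v') →
      ∀ x, x ∈ (path u v h).support → x ∈ (path u' v' h').support →
        x ∈ ({branch u, branch v} : Set V) ∩ {branch u', branch v'}

theorem ContainsSubdivision.nonempty {V W : Type*} {G : SimpleGraph V} {H : SimpleGraph W}
    (h : ContainsSubdivision G H) : Nonempty (Subdivision G H) :=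
  let ⟨b, P, hb, hP, hbP, hPP⟩ := h
  ⟨⟨b, P, hb, hP, hbP, hPP⟩⟩

namespace Subdivision

variable {V W : Type*} {G : SimpleGraph V} {H : SimpleGraph W} (S : Subdivision G H)
  {p q t t' : W}

theorem eq_branch_of_mem_support_of_mem_support (ht : H.Adj p t) (ht' : H.Adj p t')
    (htt' : t ≠ t') {x : V} (hx : x ∈ (S.path p t ht).support)
    (hx' : x ∈ (S.path p t' ht').support) : x = S.branch p := by
  have hne : s(p, t) ≠ s(p, t') := by
    rw [Ne, Sym2.eq_iff]
    rintro (⟨-, rfl⟩ | ⟨rfl, -⟩)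
    exacts [htt' rfl, ht'.ne rfl]
  obtain ⟨hxp | hxt, hxp' | hxt'⟩ :=
    S.mem_inter_of_mem_support_of_mem_support p t p t' ht ht' hne x hx hx'
  exacts [hxp, hxp, hxp', absurd (S.branch_injective (hxt.symm.trans hxt')) htt']

theorem adj_snd_path (ht : H.Adj p t) : G.Adj (S.branch p) (S.path p t ht).snd :=
  Walk.adj_snd (Walk.not_nil_of_ne (S.branch_injective.ne ht.ne))

theorem eq_of_snd_path_eq (ht : H.Adj p t) (ht' : H.Adj p t')
    (h : (S.path p t ht).snd = (S.path p t' ht').snd) : t = t' := by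
  by_contra htt'
  refine (S.adj_snd_path ht).ne' (S.eq_branch_of_mem_support_of_mem_support ht ht' htt'
    (Walk.getVert_mem_support _ 1) ?_)
  rw [h]
  exact Walk.getVert_mem_support _ 1

def firstStep (p : W) : H.neighborSet p → G.neighborSet (S.branch p) :=
  fun t => ⟨(S.path p t t.2).snd, S.adj_snd_path t.2⟩

theorem firstStep_injective (p : W) : Function.Injective (S.firstStep p) :=
  fun t t' h => Subtype.ext (S.eq_of_snd_path_eq t.2 t'.2 (congrArg Subtype.val h))

theorem ncard_diff_range_add_ncard_diff_range_le [Finite V] [Finite W] {s t : Set V}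
    (hst : Disjoint s t) :
    (s \ Set.range S.branch).ncard + (t \ Set.range S.branch).ncard ≤ Nat.card V - Nat.card W := by
  rw [← Set.ncard_union_eq (hst.mono Set.sdiff_subset Set.sdiff_subset),
    ← Set.ncard_range_of_injective S.branch_injective, ← Set.ncard_compl]
  exact Set.ncard_le_ncard (Set.union_subset (fun _ hx => hx.2) (fun _ hx => hx.2))

variable [G.LocallyFinite] [H.LocallyFinite]

theorem degree_le (p : W) : H.degree p ≤ G.degree (S.branch p) := by
  simpa only [card_neighborSet_eq_degree] using
    Fintype.card_le_of_injective _ (S.firstStep_injective p)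

theorem card_le_card_filter_le_degree (S : Subdivision G H) [Fintype V] [Fintype W] {k : ℕ}
    (hk : ∀ w, k ≤ H.degree w) : Fintype.card W ≤ #{x | k ≤ G.degree x} :=
  card_le_card_of_injOn S.branch
    (fun w _ => mem_filter.2 ⟨mem_univ _, (hk w).trans (S.degree_le w)⟩)
    S.branch_injective.injOn

theorem exists_snd_path_eq (hdeg : G.degree (S.branch p) ≤ H.degree p) {y : V}
    (hy : G.Adj (S.branch p) y) : ∃ t, ∃ ht : H.Adj p t, (S.path p t ht).snd = y := by
  have hbij : Function.Bijective (S.firstStep p) := by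
    rw [Fintype.bijective_iff_injective_and_card]
    simp only [card_neighborSet_eq_degree]
    exact ⟨S.firstStep_injective p, (S.degree_le p).antisymm hdeg⟩
  obtain ⟨⟨t, ht⟩, h⟩ := hbij.2 ⟨y, hy⟩
  exact ⟨t, ht, congrArg Subtype.val h⟩

theorem adj_of_adj_branch (hdeg : G.degree (S.branch p) ≤ H.degree p)
    (hadj : G.Adj (S.branch p) (S.branch q)) : H.Adj p q := by
  obtain ⟨t, ht, h⟩ := S.exists_snd_path_eq hdeg hadj
  obtain rfl | rfl := S.eq_or_eq_of_branch_mem_support p t ht q (h ▸ Walk.getVert_mem_support _ 1)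
  · exact absurd hadj (G.loopless.irrefl _)
  · exact ht

/- If `y` were not a branch vertex, the path through `y` would continue to a neighbour of
`S.branch p`, which is where another path starts. -/
theorem mem_range_of_adj_of_forall_adj (hdeg : G.degree (S.branch p) ≤ H.degree p) {y : V}
    (hy : G.Adj (S.branch p) y) (htwin : ∀ z, z ≠ S.branch p → G.Adj y z → G.Adj (S.branch p) z) :
    y ∈ Set.range S.branch := by
  by_contra hyS
  obtain ⟨t, ht, rfl⟩ := S.exists_snd_path_eq hdeg hy
  set P := S.path p t ht
  have hlen : 1 < P.length := by
    by_contra! h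
    exact hyS ⟨t, (P.getVert_of_length_le h).symm⟩
  have hyz : G.Adj P.snd (P.getVert 2) := P.adj_getVert_succ hlen
  have hzp : P.getVert 2 ≠ S.branch p := by
    rw [Ne, (S.isPath_path p t ht).getVert_eq_start_iff hlen]
    omega
  obtain ⟨t', ht', h⟩ := S.exists_snd_path_eq hdeg (htwin _ hzp hyz)
  obtain rfl | htt' := eq_or_ne t t'
  · exact hyz.ne h
  · exact hzp (S.eq_branch_of_mem_support_of_mem_support ht ht' htt'
      (P.getVert_mem_support 2) (h ▸ Walk.getVert_mem_support _ 1))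

theorem notMem_range_of_adj_of_adj (hH : H.CliqueFree 3)
    (hp : G.degree (S.branch p) ≤ H.degree p) (hq : G.degree (S.branch q) ≤ H.degree q)
    (hpq : G.Adj (S.branch p) (S.branch q)) {z : V} (hpz : G.Adj (S.branch p) z)
    (hqz : G.Adj (S.branch q) z) : z ∉ Set.range S.branch := by
  rintro ⟨r, rfl⟩
  classical
  exact hH {p, q, r} (is3Clique_triple_iff.2
    ⟨S.adj_of_adj_branch hp hpq, S.adj_of_adj_branch hp hpz, S.adj_of_adj_branch hq hqz⟩)

theorem two_le_ncard_diff_range [DecidableEq V] (hH₃ : H.CliqueFree 3)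
    (hHdeg : ∀ w, 3 ≤ H.degree w) {u₁ u₂ v₁ v₂ : V} (hv : v₁ ≠ v₂)
    (hu₁ : G.neighborFinset u₁ = {u₂, v₁, v₂}) (hu₂ : G.neighborFinset u₂ = {u₁, v₁, v₂}) :
    2 ≤ (({u₁, u₂, v₁, v₂} : Set V) \ Set.range S.branch).ncard := by
  have hadj : ∀ {a b : V}, G.neighborFinset a = {b, v₁, v₂} →
      ∀ z, G.Adj a z ↔ z = b ∨ z = v₁ ∨ z = v₂ := by
    intro a b ha z
    simp [← mem_neighborFinset, ha]
  have hdeg : ∀ {a b : V} {p : W}, G.neighborFinset a = {b, v₁, v₂} → S.branch p = a →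
      G.degree (S.branch p) ≤ H.degree p := by
    rintro a b p ha rfl
    rw [← card_neighborFinset_eq_degree, ha]
    exact card_le_three.trans (hHdeg p)
  have htwin : ∀ {a b : V}, G.neighborFinset a = {b, v₁, v₂} → G.neighborFinset b = {a, v₁, v₂} →
      a ∈ Set.range S.branch → b ∈ Set.range S.branch := by
    rintro a b ha hb ⟨p, rfl⟩
    refine S.mem_range_of_adj_of_forall_adj (hdeg ha rfl) (by simp [hadj ha]) fun z hz hbz => ?_
    grind [hadj ha, hadj hb]
  by_cases hu : u₁ ∈ Set.range S.branch
  · obtain ⟨p, hp⟩ := hu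
    obtain ⟨q, hq⟩ := htwin hu₁ hu₂ ⟨p, hp⟩
    have hvS : ∀ v, v = v₁ ∨ v = v₂ → v ∉ Set.range S.branch := fun v hv =>
      S.notMem_range_of_adj_of_adj hH₃ (hdeg hu₁ hp) (hdeg hu₂ hq) (by simp [hp, hq, hadj hu₁])
        (by simp [hp, hadj hu₁, hv]) (by simp [hq, hadj hu₂, hv])
    calc 2 = ({v₁, v₂} : Set V).ncard := (Set.ncard_pair hv).symm
      _ ≤ _ := Set.ncard_le_ncard (by grind)
  · have hu' : u₂ ∉ Set.range S.branch := fun h => hu (htwin hu₂ hu₁ h)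
    calc 2 = ({u₁, u₂} : Set V).ncard := (Set.ncard_pair (G.ne_of_adj (by simp [hadj hu₁]))).symm
      _ ≤ _ := Set.ncard_le_ncard (by grind)

end Subdivision

instance {R : Type*} [Ring R] [DecidableEq R] : DecidableRel (idemGraph R).Adj :=
  fun x y => inferInstanceAs (Decidable (x ≠ y ∧ (x + y) * (x + y) = x + y))

instance {α β : Type*} : DecidableRel (completeBipartiteGraph α β).Adj :=
  fun x y => inferInstanceAs (Decidable (x.isLeft ∧ y.isRight ∨ x.isRight ∧ y.isLeft))

theorem not_containsSubdivision_completeGraph_five :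
    ¬ ContainsSubdivision (idemGraph (ZMod 2 × ZMod 4)) (completeGraph (Fin 5)) := by
  intro h
  obtain ⟨S⟩ := h.nonempty
  exact absurd (S.card_le_card_filter_le_degree (k := 4) (by simp)) (by decide)

theorem not_containsSubdivision_completeBipartiteGraph_three_three :
    ¬ ContainsSubdivision (idemGraph (ZMod 2 × ZMod 4))
      (completeBipartiteGraph (Fin 3) (Fin 3)) := by
  intro h
  obtain ⟨S⟩ := h.nonempty
  have hH₃ : (completeBipartiteGraph (Fin 3) (Fin 3)).CliqueFree 3 :=
    (CompleteBipartiteGraph.bicoloring _ _).colorable.cliqueFree (by decide)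
  have hHdeg : ∀ w, 3 ≤ (completeBipartiteGraph (Fin 3) (Fin 3)).degree w := by decide
  have h₀₁ := S.two_le_ncard_diff_range hH₃ hHdeg (u₁ := (0, 0)) (u₂ := (1, 0)) (v₁ := (0, 1))
    (v₂ := (1, 1)) (by decide) (by decide) (by decide)
  have h₂₃ := S.two_le_ncard_diff_range hH₃ hHdeg (u₁ := (0, 2)) (u₂ := (1, 2)) (v₁ := (0, 3))
    (v₂ := (1, 3)) (by decide) (by decide) (by decide)
  have hle := S.ncard_diff_range_add_ncard_diff_range_le (s := {(0, 0), (1, 0), (0, 1), (1, 1)})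
    (t := {(0, 2), (1, 2), (0, 3), (1, 3)}) (by rw [Set.disjoint_left]; decide)
  have hcard : Nat.card (ZMod 2 × ZMod 4) - Nat.card (Fin 3 ⊕ Fin 3) = 2 := by
    simp [Nat.card_eq_fintype_card]
  omega

theorem stmt12 : IsPlanar (idemGraph (ZMod 2 × ZMod 4)) :=
  ⟨not_containsSubdivision_completeGraph_five,
    not_containsSubdivision_completeBipartiteGraph_three_three⟩
end

section
/- Let R be a ring with unity. Then (R, +) is generated by Id(R) and R has no nontrivial idempotents (Id(R) = {0, 1}) if and only if the idempotent graph G_Id(R) is a path graph. -/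
/-- A path graph: connected, acyclic, and every vertex has at most two
neighbours. -/
def IsPathGraph {V : Type*} (G : SimpleGraph V) : Prop :=
  G.Connected ∧ G.IsAcyclic ∧
    ∀ v a b c : V, G.Adj v a → G.Adj v b → G.Adj v c → a = b ∨ a = c ∨ b = c

/-!
Neighbours of `x` in the idempotent graph are among `e - x` with `e` idempotent. If the only
idempotents are `0` and `1`, every vertex has at most the two neighbours `-x` and `1 - x`, the
vertex `0` has only the neighbour `1`, and the walk `x, -x, x + 1` shows that all integers lie in
the component of `0`; as `(R, +)` is then generated by `1`, the graph is a path. Conversely, a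
walk `x ~ y` keeps `y = (x + y) - x` inside the additive subgroup generated by the idempotents,
and an idempotent `e ∉ {0, 1}` would produce the triangle `0, e, 1 - e`.
-/

open SimpleGraph

namespace SimpleGraph

variable {V : Type*} {G : SimpleGraph V}

lemma Walk.IsCycle.exists_toSubgraph_adj_ne {u v : V} {c : G.Walk u u} (hc : c.IsCycle)
    (hv : v ∈ c.support) : ∃ a b, a ≠ b ∧ c.toSubgraph.Adj v a ∧ c.toSubgraph.Adj v b := by
  obtain ⟨a, b, hab, hnbr⟩ := Set.ncard_eq_two.mp (hc.ncard_neighborSet_toSubgraph_eq_two hv)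
  have ha : a ∈ c.toSubgraph.neighborSet v := by simp [hnbr]
  have hb : b ∈ c.toSubgraph.neighborSet v := by simp [hnbr]
  exact ⟨a, b, hab, ha, hb⟩

/-- With all degrees at most two, the vertex set of a cycle is closed under adjacency, so by
connectedness the cycle would pass through the vertex `v₀` of degree at most one. -/
lemma isAcyclic_of_preconnected_of_degree_le_two (hconn : G.Preconnected)
    (hdeg : ∀ v a b c : V, G.Adj v a → G.Adj v b → G.Adj v c → a = b ∨ a = c ∨ b = c)
    (v₀ : V) (hv₀ : ∀ a b, G.Adj v₀ a → G.Adj v₀ b → a = b) : G.IsAcyclic := by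
  intro u c hc
  have hclosed : ∀ v ∈ c.toSubgraph.verts, ∀ w, G.Adj v w → c.toSubgraph.Adj v w := by
    intro v hv w hvw
    obtain ⟨a, b, hab, ha, hb⟩ :=
      hc.exists_toSubgraph_adj_ne ((c.mem_verts_toSubgraph).mp hv)
    rcases hdeg v a b w ha.adj_sub hb.adj_sub hvw with h | rfl | rfl
    · exact absurd h hab
    · exact ha
    · exact hb
  have hmem : v₀ ∈ c.support := (c.mem_verts_toSubgraph).mp <|
    (hconn u v₀).mem_subgraphVerts hclosed ((c.mem_verts_toSubgraph).mpr c.start_mem_support)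
  obtain ⟨a, b, hab, ha, hb⟩ := hc.exists_toSubgraph_adj_ne hmem
  exact hab (hv₀ a b ha.adj_sub hb.adj_sub)

end SimpleGraph

lemma IsIdempotentElem.eq_one_of_eq_one_sub {R : Type*} [Ring R] {e : R}
    (he : IsIdempotentElem e) (h : e = 1 - e) : e = 1 := by
  have htwo : e + e = 1 := eq_sub_iff_add_eq.mp h
  calc e = e * (e + e) := by rw [htwo, mul_one]
    _ = e + e := by rw [mul_add, he.eq]
    _ = 1 := htwo

namespace idemGraph

variable {R : Type*} [Ring R]

lemma reachable_of_isIdempotentElem_add {x y : R} (h : IsIdempotentElem (x + y)) :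
    (idemGraph R).Reachable x y := by
  by_cases hxy : x = y
  · exact hxy ▸ Reachable.refl x
  · exact Adj.reachable ⟨hxy, h⟩

lemma reachable_add_one (x : R) : (idemGraph R).Reachable x (x + 1) := by
  refine (reachable_of_isIdempotentElem_add (y := -x) ?_).trans
    (reachable_of_isIdempotentElem_add ?_)
  · rw [add_neg_cancel]; exact .zero
  · rw [neg_add_cancel_left]; exact .one

lemma reachable_sub_one (x : R) : (idemGraph R).Reachable x (x - 1) := by
  simpa using (reachable_add_one (x - 1)).symm

lemma reachable_intCast (n : ℤ) : (idemGraph R).Reachable 0 (n : R) := by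
  induction n using Int.induction_on with
  | zero => simp
  | succ n ih => push_cast at ih ⊢; exact ih.trans (reachable_add_one _)
  | pred n ih => push_cast at ih ⊢; exact ih.trans (reachable_sub_one _)

lemma mem_closure_of_reachable {x y : R} (h : (idemGraph R).Reachable x y)
    (hx : x ∈ AddSubgroup.closure (idemSet R)) : y ∈ AddSubgroup.closure (idemSet R) := by
  obtain ⟨p⟩ := h
  induction p with
  | nil => exact hx
  | @cons a b _ hab _ ih =>
    apply ih
    rw [← add_sub_cancel_left a b]
    exact sub_mem (AddSubgroup.subset_closure hab.2) hx

lemma closure_idemSet_eq_top (h : (idemGraph R).Preconnected) :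
    AddSubgroup.closure (idemSet R) = ⊤ :=
  eq_top_iff.mpr fun x _ => mem_closure_of_reachable (h 0 x) (zero_mem _)

lemma idemSet_eq_of_cliqueFree_three (h : (idemGraph R).CliqueFree 3) :
    idemSet R = {0, 1} := by
  classical
  ext e
  refine ⟨fun (he : IsIdempotentElem e) => ?_, by rintro (rfl | rfl); exacts [.zero, .one]⟩
  by_contra hne
  simp only [Set.mem_insert_iff, Set.mem_singleton_iff, not_or] at hne
  obtain ⟨he0, he1⟩ := hne
  apply h {0, e, 1 - e}
  rw [is3Clique_triple_iff]
  refine ⟨⟨Ne.symm he0, by rwa [zero_add]⟩, ⟨?_, by rw [zero_add]; exact he.one_sub⟩, ⟨?_, ?_⟩⟩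
  · exact fun h1 => he1 (sub_eq_zero.mp h1.symm).symm
  · exact fun h1 => he1 (he.eq_one_of_eq_one_sub h1)
  · rw [add_sub_cancel]; exact .one

section TrivialIdempotents

variable (hset : idemSet R = {0, 1})
include hset

lemma eq_neg_or_eq_one_sub_of_adj {x y : R} (h : (idemGraph R).Adj x y) : y = -x ∨ y = 1 - x := by
  have hxy : x + y ∈ idemSet R := h.2
  rw [hset] at hxy
  rcases hxy with hxy | hxy
  · exact .inl (eq_neg_of_add_eq_zero_right hxy)
  · exact .inr (eq_sub_of_add_eq' hxy)

lemma eq_or_eq_or_eq_of_adj (v a b c : R) (ha : (idemGraph R).Adj v a) (hb : (idemGraph R).Adj v b)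
    (hc : (idemGraph R).Adj v c) : a = b ∨ a = c ∨ b = c := by
  rcases eq_neg_or_eq_one_sub_of_adj hset ha with rfl | rfl <;>
  rcases eq_neg_or_eq_one_sub_of_adj hset hb with rfl | rfl <;>
  rcases eq_neg_or_eq_one_sub_of_adj hset hc with rfl | rfl <;> simp

lemma eq_one_of_adj_zero {a : R} (h : (idemGraph R).Adj 0 a) : a = 1 := by
  rcases eq_neg_or_eq_one_sub_of_adj hset h with ha | ha
  · exact absurd (ha.trans neg_zero).symm h.1
  · rwa [sub_zero] at ha

lemma connected_of_closure_eq_top (hcl : AddSubgroup.closure (idemSet R) = ⊤) :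
    (idemGraph R).Connected := by
  have hreach : ∀ x : R, (idemGraph R).Reachable 0 x := by
    intro x
    have hx : x ∈ AddSubgroup.zmultiples (1 : R) := by
      rw [AddSubgroup.zmultiples_eq_closure, ← AddSubgroup.closure_insert_zero, ← hset, hcl]
      trivial
    obtain ⟨n, rfl⟩ := AddSubgroup.mem_zmultiples_iff.mp hx
    simpa using reachable_intCast (R := R) n
  exact Connected.mk fun x y => (hreach x).symm.trans (hreach y)

end TrivialIdempotents

end idemGraph

open idemGraph in
theorem stmt16 {R : Type*} [Ring R] :
    (AddSubgroup.closure (idemSet R) = ⊤ ∧ idemSet R = {0, 1}) ↔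
      IsPathGraph (idemGraph R) := by
  constructor
  · rintro ⟨hcl, hset⟩
    have hconn := connected_of_closure_eq_top hset hcl
    refine ⟨hconn, ?_, eq_or_eq_or_eq_of_adj hset⟩
    exact isAcyclic_of_preconnected_of_degree_le_two hconn.preconnected (eq_or_eq_or_eq_of_adj hset) 0
      fun a b ha hb => (eq_one_of_adj_zero hset ha).trans (eq_one_of_adj_zero hset hb).symm
  · rintro ⟨hconn, hacyc, -⟩
    exact ⟨closure_idemSet_eq_top hconn.preconnected,
      idemSet_eq_of_cliqueFree_three (hacyc.cliqueFree le_rfl)⟩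
end

section
/- Let R be a finite commutative ring with unity such that char(R_1) = 2 for some local factor in a decomposition R ≅ R_1 × R_2 × ⋯ × R_n with n ≥ 3. Then the four vertices (0,0,…,0), (1,0,…,0), (1,1,0,…,0), (0,0,1,0,…,0) of G_Id(R) induce a complete graph K_4; in particular G_Id(R) is not outerplanar. -/
/-!
Write `e_S` for the vector with entry `1` on the coordinates in `S` and `0` elsewhere. The four
vertices are `e_∅, e_{0}, e_{0,1}, e_{2}`. Every coordinate of `e_S + e_T` is `0`, `1`, or
`1 + 1`, the last only on `S ∩ T ⊆ {0}`, where `1 + 1 = 0`; so all pairwise sums are idempotent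
and the vertices span a `K₄`, which is in particular a subdivision of `K₄`.
-/

theorem SimpleGraph.Hom.containsSubdivision {V W : Type*} {G : SimpleGraph V} {H : SimpleGraph W}
    (f : H →g G) (hf : Function.Injective f) : ContainsSubdivision G H := by
  refine ⟨f, fun u v h => (f.map_adj h).toWalk, hf, fun u v h => ?_, fun u v h w hw => ?_,
    fun u v u' v' h h' _ x hx hx' => ?_⟩
  · simpa using (f.map_adj h).ne
  · simp only [SimpleGraph.Adj.toWalk, SimpleGraph.Walk.support_cons,
      SimpleGraph.Walk.support_nil, List.mem_cons, List.not_mem_nil, or_false] at hw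
    exact hw.imp (fun h => hf h) (fun h => hf h)
  · simp only [SimpleGraph.Adj.toWalk, SimpleGraph.Walk.support_cons,
      SimpleGraph.Walk.support_nil, List.mem_cons, List.not_mem_nil, or_false] at hx hx'
    exact ⟨hx, hx'⟩

section
variable {ι : Type*} [DecidableEq ι]

def coordIndicator (R : ι → Type*) [∀ i, Semiring (R i)] (s : Finset ι) : ∀ i, R i :=
  ∑ i ∈ s, Pi.single i 1

variable {R : ι → Type*} {s t : Finset ι}

theorem coordIndicator_apply [∀ i, Semiring (R i)] (i : ι) :
    coordIndicator R s i = if i ∈ s then 1 else 0 := by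
  rw [coordIndicator, Finset.sum_apply, Finset.sum_pi_single]

theorem coordIndicator_injective [∀ i, Semiring (R i)] [∀ i, Nontrivial (R i)] :
    Function.Injective (coordIndicator R) := by
  intro s t h
  ext i
  have hi := congrFun h i
  simp only [coordIndicator_apply] at hi
  split_ifs at hi <;> simp_all

theorem isIdempotentElem_coordIndicator_add [∀ i, Semiring (R i)]
    (h : ∀ i ∈ s ∩ t, (1 : R i) + 1 = 0) :
    IsIdempotentElem (coordIndicator R s + coordIndicator R t) := by
  funext i
  simp only [Pi.mul_apply, Pi.add_apply, coordIndicator_apply]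
  split_ifs with hs ht ht
  · simp [h i (Finset.mem_inter.2 ⟨hs, ht⟩)]
  all_goals simp

theorem idemGraph_adj_coordIndicator [∀ i, Ring (R i)] [∀ i, Nontrivial (R i)] (hst : s ≠ t)
    (h : ∀ i ∈ s ∩ t, (1 : R i) + 1 = 0) :
    (idemGraph (∀ i, R i)).Adj (coordIndicator R s) (coordIndicator R t) :=
  ⟨coordIndicator_injective.ne hst, isIdempotentElem_coordIndicator_add h⟩

end

theorem stmt19 {n : ℕ} (hn : 3 ≤ n) (R : Fin n → Type*) [∀ i, CommRing (R i)]
    [∀ i, IsLocalRing (R i)]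
    (hchar : (1 : R ⟨0, by omega⟩) + 1 = 0) :
    (let G := idemGraph (∀ i, R i)
     let i0 : Fin n := ⟨0, by omega⟩
     let i1 : Fin n := ⟨1, by omega⟩
     let i2 : Fin n := ⟨2, by omega⟩
     let v0 : ∀ i, R i := 0
     let v1 := Pi.single i0 (1 : R i0)
     let v2 := Pi.single i0 (1 : R i0) + Pi.single i1 (1 : R i1)
     let v3 := Pi.single i2 (1 : R i2)
     ∃ f : Fin 4 → (∀ i, R i), f 0 = v0 ∧ f 1 = v1 ∧ f 2 = v2 ∧ f 3 = v3 ∧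
       Function.Injective f ∧ ∀ i j, i ≠ j → G.Adj (f i) (f j)) ∧
    ¬ IsOuterplanar (idemGraph (∀ i, R i)) := by
  let i0 : Fin n := ⟨0, by omega⟩
  let i1 : Fin n := ⟨1, by omega⟩
  let i2 : Fin n := ⟨2, by omega⟩
  have h01 : i0 ≠ i1 := by simp [i0, i1, Fin.ext_iff]
  have h02 : i0 ≠ i2 := by simp [i0, i2, Fin.ext_iff]
  have h12 : i1 ≠ i2 := by simp [i1, i2, Fin.ext_iff]
  let S : Fin 4 → Finset (Fin n) := ![∅, {i0}, {i0, i1}, {i2}]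
  have hS : Function.Injective S := by
    intro a b hab
    have hmem := congrArg (fun s => (i0 ∈ s, i1 ∈ s, i2 ∈ s)) hab
    fin_cases a <;> fin_cases b <;>
      simp [S, h01, h02, h12, h01.symm, h02.symm, h12.symm] at hmem ⊢
  have hoverlap : ∀ a b, a ≠ b → S a ∩ S b ⊆ {i0} := by
    intro a b hab
    fin_cases a <;> fin_cases b <;> simp_all [S, Finset.subset_iff]
  have hadj : ∀ a b, a ≠ b →
      (idemGraph (∀ i, R i)).Adj (coordIndicator R (S a)) (coordIndicator R (S b)) :=
    fun a b hab => idemGraph_adj_coordIndicator (hS.ne hab) fun i hi => by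
      obtain rfl := Finset.mem_singleton.1 (hoverlap a b hab hi)
      exact hchar
  let K4 : SimpleGraph.completeGraph (Fin 4) →g idemGraph (∀ i, R i) := ⟨_, hadj _ _⟩
  have hK4 : Function.Injective K4 := coordIndicator_injective.comp hS
  refine ⟨⟨coordIndicator R ∘ S, by simp [S, coordIndicator], ?_, ?_, ?_, hK4, hadj⟩,
    fun h => h.1 (K4.containsSubdivision hK4)⟩ <;>
    simp only [Function.comp_apply, coordIndicator, S, Matrix.cons_val_one, Matrix.cons_val_zero,
      Matrix.cons_val, Finset.sum_singleton, Finset.sum_pair h01] <;> rfl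
end
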